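/- In the reduction from Set Cover to DkℓSP, the Set Cover instance (N with n elements, family F of w subsets, budget γ) has a cover of size γ if and only if the constructed routing instance admits a secure set S of size k = n + γ + 1 making at least ℓ = n + w + 1 ASes happy. -/

import Mathlib

open scoped Classical

namespace SBGP

/-- Business relationship of a neighbor, from the point of view of a given AS. -/
inductive Rel
  | customer
  | peer
  | provider
deriving DecidableEq

/-- The three positions at which the secure-route preference step can be inserted. -/
inductive SecModel
  | first
  | second
  | third
deriving DecidableEq

/-- An AS-level graph with business relationships on its edges. -/
structure ASGraph (V : Type*) where
  adj : V → V → Bool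
  /-- `rel u v` is the relationship of `v` as seen from `u`
      (`customer` means `v` is `u`'s customer, etc.). -/
  rel : V → V → Rel
  adj_symm : ∀ u v, adj u v = adj v u
  adj_irrefl : ∀ v, adj v v = false
  rel_consistent : ∀ u v, adj u v = true →
    ((rel u v = Rel.customer ↔ rel v u = Rel.provider) ∧
     (rel u v = Rel.peer ↔ rel v u = Rel.peer))

variable {V : Type*}

def lpRank : Rel → ℕ
  | Rel.customer => 0
  | Rel.peer => 1
  | Rel.provider => 2

/-- The relationship of the next hop of a route (`none` for trivial routes). -/
def nextRel (G : ASGraph V) : List V → Option Rel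
  | a :: b :: _ => some (G.rel a b)
  | _ => none

/-- Local-preference value of a route (customer < peer < provider). -/
def lpVal (G : ASGraph V) : List V → ℕ
  | a :: b :: _ => lpRank (G.rel a b)
  | _ => 0

/-- `R` is a (nonempty) path in `G`. -/
def IsPath (G : ASGraph V) : List V → Prop
  | [] => False
  | [_] => True
  | a :: b :: rest => G.adj a b = true ∧ IsPath G (b :: rest)

/-- `R` is a simple route in `G` ending at `d`. -/
def IsRouteTo (G : ASGraph V) (R : List V) (d : V) : Prop :=
  R.Nodup ∧ IsPath G R ∧ R.getLast? = some d

/-- The export rule (Ex) along a route `a :: b :: c :: …`: each internal AS `b`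
announces its route (with next hop `c`) to `a` only if that route is a customer
route of `b`, or `a` is `b`'s customer. -/
def ExportOK (G : ASGraph V) : List V → Prop
  | a :: b :: c :: rest =>
      (G.rel b c = Rel.customer ∨ G.rel b a = Rel.customer) ∧
      ExportOK G (b :: c :: rest)
  | _ => True

/-- A route is secure iff every AS on it has deployed S*BGP and it does not
contain the attacker (the bogus route is insecure even if the attacker is in `S`). -/
def SecureRoute (S : Finset V) (m : Option V) (R : List V) : Prop :=
  (∀ v ∈ R, v ∈ S) ∧ (∀ m', m = some m' → m' ∉ R)

/-- A legitimate route: ends at the destination `d` and avoids the attacker. -/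
def LegitRoute (m : Option V) (d : V) (R : List V) : Prop :=
  R.getLast? = some d ∧ ∀ m', m = some m' → m' ∉ R

/-- Perceivable routes at `s` for destination `d` when the (optional) attacker `m`
announces the bogus path "m,d": either a genuine export-compliant route to `d`
avoiding `m`, or an export-compliant route to `m` extended by `m`'s claimed
(possibly nonexistent) edge to `d`. -/
def Perceivable (G : ASGraph V) (m : Option V) (d : V) (s : V) (R : List V) : Prop :=
  R.head? = some s ∧
  ((IsRouteTo G R d ∧ ExportOK G R ∧ ∀ m', m = some m' → m' ∉ R) ∨
   (∃ m' R', m = some m' ∧ R = R' ++ [d] ∧ IsRouteTo G R' m' ∧ d ∉ R' ∧ ExportOK G R'))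

/-- The rank of a route (smaller is better), encoding lexicographically the
ranking steps of the given security model: LP (customer > peer > provider),
SP (shorter > longer) and SecP (secure > insecure), in the order determined by
the model.  All components are `< Fintype.card V + 2`, so the encoding is
faithful on simple routes. -/
noncomputable def rankNat [Fintype V] (G : ASGraph V) (S : Finset V) (m : Option V)
    (mdl : SecModel) (R : List V) : ℕ :=
  let B := Fintype.card V + 2
  let lp := lpVal G R
  let len := R.length
  let sec : ℕ := if SecureRoute S m R then 0 else 1
  match mdl with
  | SecModel.first => sec * B * B + lp * B + len
  | SecModel.second => lp * B * B + sec * B + len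
  | SecModel.third => lp * B * B + len * B + sec

/-- `n` exports the route `R` (its currently selected route) to neighbor `s`:
always if `R` is a customer route of `n` or `n` originates `R`; otherwise only
if `s` is `n`'s customer. -/
def exportsTo (G : ASGraph V) (n s : V) : List V → Prop
  | _ :: c :: _ => G.rel n c = Rel.customer ∨ G.rel n s = Rel.customer
  | _ => True

/-- Routes available to `s` given the current selections `σ` of all ASes:
routes exported by neighbors (with BGP loop detection), together with the
attacker's bogus announcement "m,d" to each of its neighbors. -/
def Avail (G : ASGraph V) (m : Option V) (d : V) (σ : V → List V) (s : V)
    (R : List V) : Prop :=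
  (∃ n, G.adj s n = true ∧ (∀ m', m = some m' → n ≠ m') ∧ σ n ≠ [] ∧
      (σ n).head? = some n ∧ s ∉ σ n ∧ exportsTo G n s (σ n) ∧ R = s :: σ n) ∨
  (∃ m', m = some m' ∧ G.adj s m' = true ∧ s ≠ d ∧ R = [s, m', d])

/-- A stable routing state for destination `d`, secure deployment `S`,
attacker `m`, security model `mdl` and tiebreak `tb`: every AS (other than the
destination and the attacker) selects the best available route, where ties in
rank are broken by the strict tiebreak `tb`. -/
def Stable [Fintype V] (G : ASGraph V) (tb : V → List V → ℕ) (S : Finset V)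
    (m : Option V) (d : V) (mdl : SecModel) (σ : V → List V) : Prop :=
  σ d = [d] ∧
  (∀ m', m = some m' → σ m' = []) ∧
  ∀ s, s ≠ d → (∀ m', m = some m' → s ≠ m') →
    ((σ s = [] ∧ ∀ R, ¬ Avail G m d σ s R) ∨
     (Avail G m d σ s (σ s) ∧
      ∀ R, Avail G m d σ s R → R ≠ σ s →
        rankNat G S m mdl (σ s) < rankNat G S m mdl R ∨
        (rankNat G S m mdl (σ s) = rankNat G S m mdl R ∧ tb s (σ s) < tb s R)))

/-- `s` is happy: it selects a legitimate route to `d`, avoiding the attacker. -/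
def Happy (m : Option V) (d : V) (σ : V → List V) (s : V) : Prop :=
  σ s ≠ [] ∧ (σ s).getLast? = some d ∧ ∀ m', m = some m' → m' ∉ σ s

/-- The set of most-preferred perceivable routes of `s` (before the tiebreak step). -/
def BPR [Fintype V] (G : ASGraph V) (S : Finset V) (m : Option V) (d : V)
    (mdl : SecModel) (s : V) (R : List V) : Prop :=
  Perceivable G m d s R ∧
  ∀ R', Perceivable G m d s R' → rankNat G S m mdl R ≤ rankNat G S m mdl R'

/-- The number of happy source ASes (sources other than `m` and `d`). -/
noncomputable def happyCount [Fintype V] [DecidableEq V] (m d : V)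
    (σ : V → List V) : ℕ :=
  (Finset.univ.filter fun s => s ≠ m ∧ s ≠ d ∧ Happy (some m) d σ s).card

/-- The customer-provider hierarchy is acyclic. -/
def Hierarchy (G : ASGraph V) : Prop :=
  ∃ h : V → ℕ, ∀ u v, G.adj u v = true → G.rel u v = Rel.customer → h v < h u

/-- The tiebreak of every AS is deterministic (injective on routes). -/
def InjTB (tb : V → List V → ℕ) : Prop :=
  ∀ s, Function.Injective (tb s)

end SBGP
namespace SBGP

/-- Vertices of the reduction: element ASes, set ASes, the destination
(`Sum.inr (Sum.inr false)`) and the attacker (`Sum.inr (Sum.inr true)`). -/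
abbrev RedV (n w : ℕ) := Fin n ⊕ Fin w ⊕ Bool

def redDst (n w : ℕ) : RedV n w := Sum.inr (Sum.inr false)

def redAtt (n w : ℕ) : RedV n w := Sum.inr (Sum.inr true)

/-- The AS graph constructed from a Set Cover instance: the attacker `m` and
every set AS `s_j` are customers of the element ASes (`e_i`–`s_j` edge present
iff `e_i ∈ F j`), each set AS `s_j` is a provider of the destination `d`. -/
noncomputable def redGraph (n w : ℕ) (F : Fin w → Finset (Fin n)) :
    ASGraph (RedV n w) where
  adj x y :=
    match x, y with
    | Sum.inl i, Sum.inr (Sum.inl j) => decide (i ∈ F j)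
    | Sum.inr (Sum.inl j), Sum.inl i => decide (i ∈ F j)
    | Sum.inl _, Sum.inr (Sum.inr true) => true
    | Sum.inr (Sum.inr true), Sum.inl _ => true
    | Sum.inr (Sum.inl _), Sum.inr (Sum.inr false) => true
    | Sum.inr (Sum.inr false), Sum.inr (Sum.inl _) => true
    | _, _ => false
  rel x y :=
    match x, y with
    | Sum.inl _, _ => Rel.customer               -- each e_i sees m and the s_j as customers
    | Sum.inr (Sum.inl _), Sum.inl _ => Rel.provider   -- each s_j sees the e_i as providers
    | Sum.inr (Sum.inl _), _ => Rel.customer     -- each s_j sees d as a customer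
    | Sum.inr (Sum.inr false), _ => Rel.provider -- d sees the s_j as providers
    | Sum.inr (Sum.inr true), _ => Rel.provider  -- m sees the e_i as providers
  adj_symm := by
    rintro (i | j | b) (i' | j' | b') <;> first
      | rfl
      | (cases b <;> rfl)
      | (cases b' <;> rfl)
      | (cases b <;> cases b' <;> rfl)
  adj_irrefl := by
    rintro (i | j | b)
    · rfl
    · rfl
    · cases b <;> rfl
  rel_consistent := by
    rintro (i | j | (_ | _)) (i' | j' | (_ | _)) h <;> simp_all
  
/-- The tiebreak of the reduction: every element AS prefers the route through
the attacker over any route through a set AS. -/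
def redTb (n w : ℕ) : RedV n w → List (RedV n w) → ℕ := fun _ R =>
  match R with
  | _ :: Sum.inr (Sum.inr true) :: _ => 0
  | _ :: Sum.inr (Sum.inl j) :: _ => j.val + 1
  | _ :: Sum.inl i :: _ => n + w + 2 + i.val
  | _ => n + w + 1


/-! The bogus route `e_i, m, d` is offered to every element AS `e_i`; it has the same local
preference and length as the legitimate routes `e_i, s_j, d` and wins every tie-break. So `e_i`
is happy in a stable state only if its route is strictly better, i.e. secure, which puts `e_i`,
some set AS `s_j ∋ e_i` and `d` into `S`; the set ASes in `S` then form a cover of size at most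
`|S| - n - 1`. Conversely, deploying at all `e_i`, at `d` and at the set ASes of a cover padded
to size `γ` makes the routes `e_i, s_j, d` through the cover secure, and routing each `e_i`
through the least such `s_j` is stable and makes every AS but `m` happy. -/

section Rank

variable [Fintype V] {G : ASGraph V} {S : Finset V} {m : Option V} {R R' : List V}

lemma rankNat_lt_of_secure (mdl : SecModel) (hlp : lpVal G R = lpVal G R')
    (hlen : R.length = R'.length) (hR : SecureRoute S m R) (hR' : ¬ SecureRoute S m R') :
    rankNat G S m mdl R < rankNat G S m mdl R' := by
  have hB : 0 < Fintype.card V + 2 := by omega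
  cases mdl <;> simp only [rankNat, if_pos hR, if_neg hR', hlp, hlen] <;> nlinarith

lemma rankNat_eq_of_secure_iff (mdl : SecModel) (hlp : lpVal G R = lpVal G R')
    (hlen : R.length = R'.length) (hsec : SecureRoute S m R ↔ SecureRoute S m R') :
    rankNat G S m mdl R = rankNat G S m mdl R' := by
  simp only [rankNat, hlp, hlen, hsec]

lemma rankNat_le_of_not_secure (mdl : SecModel) (hlp : lpVal G R = lpVal G R')
    (hlen : R'.length ≤ R.length) (hR : ¬ SecureRoute S m R) :
    rankNat G S m mdl R' ≤ rankNat G S m mdl R := by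
  by_cases hR' : SecureRoute S m R' <;>
    cases mdl <;> simp only [rankNat, if_neg hR, hR', if_true, if_false, hlp] <;> nlinarith

lemma rankNat_lt_of_lpVal_lt (mdl : SecModel) (hlp : lpVal G R < lpVal G R')
    (hsec : SecureRoute S m R' → SecureRoute S m R) (hlen : R.length < Fintype.card V + 2) :
    rankNat G S m mdl R < rankNat G S m mdl R' := by
  have hB : 2 ≤ Fintype.card V + 2 := by omega
  have hlpB := Nat.mul_le_mul_right ((Fintype.card V + 2) * (Fintype.card V + 2)) hlp
  have hlenB := Nat.mul_lt_mul_of_pos_right hlen (by omega : 0 < Fintype.card V + 2)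
  by_cases hR : SecureRoute S m R <;> by_cases hR' : SecureRoute S m R' <;>
    simp_all only [not_true_eq_false, imp_false] <;>
    cases mdl <;> simp only [rankNat, hR, hR', if_true, if_false] <;> nlinarith

end Rank

lemma avail_cases {G : ASGraph V} {m d s : V} {σ : V → List V} {R : List V}
    (h : Avail G (some m) d σ s R) :
    (∃ x t, G.adj s x = true ∧ x ≠ m ∧ σ x = x :: t ∧ R = s :: x :: t) ∨
      (G.adj s m = true ∧ R = [s, m, d]) := by
  rcases h with ⟨x, hadj, hxm, -, hhead, -, -, rfl⟩ | ⟨m', hm', hadj, -, rfl⟩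
  · left
    obtain ⟨t, hσx⟩ := List.head?_eq_some_iff.mp hhead
    exact ⟨x, t, hadj, hxm m rfl, hσx, by rw [hσx]⟩
  · cases hm'
    exact Or.inr ⟨hadj, rfl⟩

lemma avail_cons {G : ASGraph V} {m d s x : V} {σ : V → List V} {t : List V}
    (hadj : G.adj s x = true) (hxm : x ≠ m) (hσx : σ x = x :: t) (hs : s ∉ x :: t)
    (hexp : exportsTo G x s (x :: t)) : Avail G (some m) d σ s (s :: x :: t) :=
  Or.inl ⟨x, hadj, fun _ h => Option.some.inj h ▸ hxm, by simp [hσx], by simp [hσx],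
    hσx ▸ hs, hσx ▸ hexp, by rw [hσx]⟩

lemma card_filter_ne_and_le_iff {α : Type*} [Fintype α] [DecidableEq α] (a : α)
    (P : α → Prop) [DecidablePred P] :
    Fintype.card α ≤ (Finset.univ.filter fun s => s ≠ a ∧ P s).card + 1 ↔
      ∀ s ≠ a, P s := by
  have hcard : (Finset.univ.erase a).card + 1 = Fintype.card α := by
    rw [Finset.card_erase_add_one (Finset.mem_univ a), Finset.card_univ]
  have hsub : (Finset.univ.filter fun s => s ≠ a ∧ P s) ⊆ Finset.univ.erase a :=
    fun s hs => by
    simp only [Finset.mem_filter, Finset.mem_erase] at hs ⊢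
    exact ⟨hs.2.1, hs.1⟩
  constructor
  · intro h s hs
    have heq := Finset.eq_of_subset_of_card_le hsub (by omega)
    have hmem : s ∈ Finset.univ.erase a := Finset.mem_erase.mpr ⟨hs, Finset.mem_univ s⟩
    exact (Finset.mem_filter.mp (heq ▸ hmem)).2.2
  · intro h
    have heq : (Finset.univ.filter fun s => s ≠ a ∧ P s) = Finset.univ.erase a :=
      Finset.Subset.antisymm hsub fun s hs => by
        simp only [Finset.mem_filter, Finset.mem_erase] at hs ⊢
        exact ⟨hs.2, hs.1, h s hs.1⟩
    rw [heq]
    omega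

lemma SecureRoute.of_subset {S : Finset V} {m : Option V} {R R' : List V}
    (h : SecureRoute S m R') (hRR' : R ⊆ R') : SecureRoute S m R :=
  ⟨fun v hv => h.1 v (hRR' hv), fun m' hm' hv => h.2 m' hm' (hRR' hv)⟩

open Sum

section Reduction

variable {n w : ℕ} {F : Fin w → Finset (Fin n)}

lemma card_redV : Fintype.card (RedV n w) = n + w + 2 := by
  simp only [Fintype.card_sum, Fintype.card_fin, Fintype.card_bool]; omega

lemma avail_redGraph_inl {σ : RedV n w → List (RedV n w)} {i : Fin n} {R : List (RedV n w)}
    (h : Avail (redGraph n w F) (some (redAtt n w)) (redDst n w) σ (inl i) R) :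
    R = [inl i, redAtt n w, redDst n w] ∨
      ∃ j t, i ∈ F j ∧ σ (inr (inl j)) = inr (inl j) :: t ∧
        R = inl i :: inr (inl j) :: t := by
  rcases avail_cases h with ⟨x, t, hadj, hxm, hσx, rfl⟩ | ⟨-, rfl⟩
  · rcases x with i' | j | (_ | _)
    · simp [redGraph] at hadj
    · exact Or.inr ⟨j, t, by simpa [redGraph] using hadj, hσx, rfl⟩
    · simp [redGraph] at hadj
    · exact absurd rfl hxm
  · exact Or.inl rfl

lemma avail_redGraph_inr_inl {σ : RedV n w → List (RedV n w)} {j : Fin w} {R : List (RedV n w)}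
    (h : Avail (redGraph n w F) (some (redAtt n w)) (redDst n w) σ (inr (inl j)) R) :
    (∃ t, σ (redDst n w) = redDst n w :: t ∧ R = inr (inl j) :: redDst n w :: t) ∨
      ∃ i t, i ∈ F j ∧ σ (inl i) = inl i :: t ∧ R = inr (inl j) :: inl i :: t := by
  rcases avail_cases h with ⟨x, t, hadj, hxm, hσx, rfl⟩ | ⟨hadj, -⟩
  · rcases x with i | j' | (_ | _)
    · exact Or.inr ⟨i, t, by simpa [redGraph] using hadj, hσx, rfl⟩
    · simp [redGraph] at hadj
    · exact Or.inl ⟨t, hσx, rfl⟩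
    · exact absurd rfl hxm
  · simp [redGraph, redAtt] at hadj

def deployment (n : ℕ) (C : Finset (Fin w)) : Finset (RedV n w) :=
  Finset.univ.disjSum (C.disjSum {false})

lemma card_deployment (C : Finset (Fin w)) : (deployment n C).card = n + C.card + 1 := by
  simp [deployment, Finset.card_disjSum, add_assoc]

lemma deployment_subset {S : Finset (RedV n w)} (he : ∀ i, inl i ∈ S) (hd : redDst n w ∈ S) :
    deployment n (Finset.univ.filter fun j => inr (inl j) ∈ S) ⊆ S := by
  rintro (i | j | (_ | _)) hx <;> simp_all [deployment, redDst]

lemma secureRoute_deployment_iff (C : Finset (Fin w)) (i : Fin n) (j : Fin w) :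
    SecureRoute (deployment n C) (some (redAtt n w)) [inl i, inr (inl j), redDst n w] ↔
      j ∈ C := by
  simp [SecureRoute, deployment, redAtt, redDst]

lemma exists_cover_mem_of_happy {S : Finset (RedV n w)} {mdl : SecModel}
    {σ : RedV n w → List (RedV n w)}
    (hst : Stable (redGraph n w F) (redTb n w) S (some (redAtt n w)) (redDst n w) mdl σ)
    (i : Fin n) (hhappy : Happy (some (redAtt n w)) (redDst n w) σ (inl i)) :
    ∃ j, i ∈ F j ∧ inl i ∈ S ∧ inr (inl j) ∈ S ∧ redDst n w ∈ S := by
  obtain ⟨hne, hlast, hm⟩ := hhappy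
  rcases hst.2.2 (inl i) (by simp [redDst]) (by simp [redAtt]) with
    ⟨hnil, -⟩ | ⟨havail, hbest⟩
  · exact absurd hnil hne
  rcases avail_redGraph_inl havail with hσ | ⟨j, t, hij, -, hσ⟩
  · exact absurd (by simp [hσ]) (hm _ rfl)
  have ht : t ≠ [] := by
    rintro rfl
    simp [hσ, redDst] at hlast
  have hbogus : Avail (redGraph n w F) (some (redAtt n w)) (redDst n w) σ (inl i)
      [inl i, redAtt n w, redDst n w] := Or.inr ⟨_, rfl, rfl, by simp [redDst], rfl⟩
  have hsec : SecureRoute S (some (redAtt n w)) (σ (inl i)) := by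
    by_contra hins
    rcases hbest _ hbogus (fun h => hm _ rfl (h ▸ by simp)) with hlt | ⟨-, htb⟩
    · refine (rankNat_le_of_not_secure mdl ?_ ?_ hins).not_gt hlt
      · rw [hσ]; rfl
      · rw [hσ]; cases t <;> simp_all
    · rw [hσ] at htb
      simp [redTb, redAtt] at htb
  obtain ⟨hmem, -⟩ := hsec
  exact ⟨j, hij, hmem _ (by simp [hσ]), hmem _ (by simp [hσ]),
    hmem _ (List.mem_of_getLast? hlast)⟩

lemma exists_cover_of_stable {γ : ℕ} {S : Finset (RedV n w)} (hS : S.card = n + γ + 1)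
    {mdl : SecModel} {σ : RedV n w → List (RedV n w)}
    (hst : Stable (redGraph n w F) (redTb n w) S (some (redAtt n w)) (redDst n w) mdl σ)
    (hhappy : ∀ i, Happy (some (redAtt n w)) (redDst n w) σ (inl i)) :
    ∃ C : Finset (Fin w), C.card ≤ γ ∧ ∀ e : Fin n, ∃ j ∈ C, e ∈ F j := by
  rcases isEmpty_or_nonempty (Fin n) with _ | ⟨⟨i₀⟩⟩
  · exact ⟨∅, by simp, isEmptyElim⟩
  choose j hjF heS hjS hdS using fun i => exists_cover_mem_of_happy hst i (hhappy i)
  refine ⟨Finset.univ.filter fun j => inr (inl j) ∈ S, ?_,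
    fun e => ⟨j e, by simp [hjS e], hjF e⟩⟩
  have := Finset.card_le_card (deployment_subset heS (hdS i₀))
  rw [card_deployment, hS] at this
  omega

/-- Minimality matches `redTb`, which breaks ties between set ASes by their index. -/
def IsLeastCoverChoice (F : Fin w → Finset (Fin n)) (C : Finset (Fin w))
    (pick : Fin n → Fin w) : Prop :=
  ∀ i, pick i ∈ C ∧ i ∈ F (pick i) ∧ ∀ j ∈ C, i ∈ F j → pick i ≤ j

lemma exists_isLeastCoverChoice {C : Finset (Fin w)} (hcov : ∀ i, ∃ j ∈ C, i ∈ F j) :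
    ∃ pick, IsLeastCoverChoice F C pick := by
  have hmin : ∀ i, ∃ j ∈ C.filter (i ∈ F ·), ∀ j' ∈ C.filter (i ∈ F ·), j ≤ j' :=
    fun i => (C.filter (i ∈ F ·)).exists_min_image id (by simpa [Finset.Nonempty] using hcov i)
  choose pick hpick hpickMin using hmin
  exact ⟨pick, fun i => ⟨(Finset.mem_filter.mp (hpick i)).1, (Finset.mem_filter.mp (hpick i)).2,
    fun j hj hij => hpickMin i j (Finset.mem_filter.mpr ⟨hj, hij⟩)⟩⟩

def coverRouting (pick : Fin n → Fin w) : RedV n w → List (RedV n w)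
  | inl i => [inl i, inr (inl (pick i)), redDst n w]
  | inr (inl j) => [inr (inl j), redDst n w]
  | inr (inr false) => [redDst n w]
  | inr (inr true) => []

lemma happy_coverRouting (pick : Fin n → Fin w) (s : RedV n w) (hs : s ≠ redAtt n w) :
    Happy (some (redAtt n w)) (redDst n w) (coverRouting pick) s := by
  rcases s with i | j | (_ | _) <;> simp_all [Happy, coverRouting, redAtt, redDst]

variable {C : Finset (Fin w)} {pick : Fin n → Fin w}

lemma coverRouting_best_inl (hpick : IsLeastCoverChoice F C pick) (mdl : SecModel) (i : Fin n)
    {R : List (RedV n w)}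
    (hR : Avail (redGraph n w F) (some (redAtt n w)) (redDst n w) (coverRouting pick) (inl i) R)
    (hne : R ≠ coverRouting pick (inl i)) :
    rankNat (redGraph n w F) (deployment n C) (some (redAtt n w)) mdl (coverRouting pick (inl i))
        < rankNat (redGraph n w F) (deployment n C) (some (redAtt n w)) mdl R ∨
      (rankNat (redGraph n w F) (deployment n C) (some (redAtt n w)) mdl (coverRouting pick (inl i))
          = rankNat (redGraph n w F) (deployment n C) (some (redAtt n w)) mdl R ∧
        redTb n w (inl i) (coverRouting pick (inl i)) < redTb n w (inl i) R) := by
  obtain ⟨hpickC, -, hpickMin⟩ := hpick i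
  have hsec := (secureRoute_deployment_iff C i (pick i)).mpr hpickC
  rcases avail_redGraph_inl hR with rfl | ⟨j, t, hij, hσj, rfl⟩
  · exact Or.inl (rankNat_lt_of_secure mdl rfl rfl hsec fun h => h.2 _ rfl (by simp))
  obtain rfl : t = [redDst n w] := (List.cons.inj hσj).2.symm
  by_cases hjC : j ∈ C
  · have hlt : pick i < j := lt_of_le_of_ne (hpickMin j hjC hij) fun h => hne (by rw [← h]; rfl)
    refine Or.inr ⟨rankNat_eq_of_secure_iff mdl rfl rfl ?_, by simpa [redTb, coverRouting]⟩
    simp only [coverRouting, secureRoute_deployment_iff, hpickC, hjC]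
  · exact Or.inl (rankNat_lt_of_secure mdl rfl rfl hsec (by rwa [secureRoute_deployment_iff]))

lemma coverRouting_best_inr_inl (mdl : SecModel) (j : Fin w) {R : List (RedV n w)}
    (hR : Avail (redGraph n w F) (some (redAtt n w)) (redDst n w) (coverRouting pick)
      (inr (inl j)) R)
    (hne : R ≠ coverRouting pick (inr (inl j))) :
    rankNat (redGraph n w F) (deployment n C) (some (redAtt n w)) mdl
        (coverRouting pick (inr (inl j))) <
      rankNat (redGraph n w F) (deployment n C) (some (redAtt n w)) mdl R := by
  rcases avail_redGraph_inr_inl hR with ⟨t, hσd, rfl⟩ | ⟨i, t, -, hσi, rfl⟩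
  · obtain rfl : t = [] := (List.cons.inj hσd).2.symm
    exact absurd rfl hne
  · obtain rfl : t = [inr (inl (pick i)), redDst n w] := (List.cons.inj hσi).2.symm
    exact rankNat_lt_of_lpVal_lt mdl Nat.two_pos (fun h => h.of_subset (by simp [coverRouting]))
      (by simp [coverRouting])

lemma coverRouting_stable (hpick : IsLeastCoverChoice F C pick) (mdl : SecModel) :
    Stable (redGraph n w F) (redTb n w) (deployment n C) (some (redAtt n w)) (redDst n w) mdl
      (coverRouting pick) := by
  refine ⟨rfl, fun m hm => by cases hm; rfl, ?_⟩
  rintro (i | j | (_ | _)) hd hm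
  · refine Or.inr ⟨avail_cons ?_ (by simp [redAtt]) rfl (by simp [redDst]) (Or.inl rfl),
      fun R hR hne => coverRouting_best_inl hpick mdl i hR hne⟩
    simpa [redGraph] using (hpick i).2.1
  · exact Or.inr ⟨avail_cons rfl (by simp [redDst, redAtt]) rfl (by simp [redDst]) trivial,
      fun R hR hne => Or.inl (coverRouting_best_inr_inl mdl j hR hne)⟩
  · exact absurd rfl hd
  · exact absurd rfl (hm _ rfl)

end Reduction

/-- **Correctness of the reduction from Set Cover to DkℓSP.**  The Set Cover
instance (`n` elements, family `F` of `w` subsets, budget `γ ≤ w`) has a cover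
of size `γ` if and only if, in each of the three security models, the
constructed routing instance admits a secure deployment `S` of size
`k = n + γ + 1` making at least `ℓ = n + w + 1` ASes happy. -/
theorem setCover_reduction_correct (n w γ : ℕ) (hγ : γ ≤ w)
    (F : Fin w → Finset (Fin n)) (mdl : SecModel) :
    (∃ C : Finset (Fin w), C.card ≤ γ ∧ ∀ e : Fin n, ∃ j ∈ C, e ∈ F j) ↔
    (∃ S : Finset (RedV n w), S.card = n + γ + 1 ∧
      ∃ σ : RedV n w → List (RedV n w),
        Stable (redGraph n w F) (redTb n w) S (some (redAtt n w)) (redDst n w) mdl σ ∧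
        n + w + 1 ≤ (Finset.univ.filter fun s =>
          s ≠ redAtt n w ∧ Happy (some (redAtt n w)) (redDst n w) σ s).card) := by
  constructor
  · rintro ⟨C, hCγ, hcov⟩
    obtain ⟨C', hCC', hC'⟩ := Finset.exists_superset_card_eq hCγ (by simpa using hγ)
    obtain ⟨pick, hpick⟩ := exists_isLeastCoverChoice fun i =>
      (hcov i).imp fun j hj => ⟨hCC' hj.1, hj.2⟩
    refine ⟨deployment n C', by rw [card_deployment, hC'], coverRouting pick,
      coverRouting_stable hpick mdl, ?_⟩
    have := (card_filter_ne_and_le_iff (redAtt n w) _).mpr (happy_coverRouting pick)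
    rw [card_redV] at this
    omega
  · rintro ⟨S, hS, σ, hst, hhappy⟩
    have hall : ∀ s ≠ redAtt n w, Happy (some (redAtt n w)) (redDst n w) σ s :=
      (card_filter_ne_and_le_iff _ _).mp (by rw [card_redV]; omega)
    exact exists_cover_of_stable hS hst fun i => hall (inl i) (by simp [redAtt])

end SBGP
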